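/- arXiv:1804.09167 — 2 statements merged into one kernel-verified Lean document; each statement's English description precedes it below -/
import Mathlib

section
/- Let R ⊆ A be an ℝ-subalgebra which is itself a Noetherian integral domain in which ℝ is algebraically closed, and let T = ℂ ⊗_ℝ R, viewed as a subring of B. Let M = {ω·a : ω ∈ B*, a ∈ A, a ≠ 0}. Then the map φ : Π(R) → Π(A) sending the class [f]_R of a nonzero f ∈ T to its class [f]_A is a well-defined group homomorphism, and the kernel of φ is the subgroup ⟨M ∩ T⟩_R of Π(R) generated by the classes [g]_R for g ∈ M ∩ T. -/
/-- The subgroup `C* · Frac(D)*` of `Frac(C)*`, for a subring `D` of a domain `C`. -/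
noncomputable def polarN (C : Type) [CommRing C] [IsDomain C] (D : Subring C) :
    Subgroup (FractionRing C)ˣ :=
  Subgroup.closure {u : (FractionRing C)ˣ |
    (∃ b : Cˣ, (u : FractionRing C) = algebraMap C (FractionRing C) (b : C)) ∨
    (∃ a : D, (u : FractionRing C) = algebraMap C (FractionRing C) (a : C))}

/-- The class `[f]` of a nonzero `f ∈ C` in the polar group `Frac(C)*/(C*·Frac(D)*)`. -/
noncomputable def polarCls (C : Type) [CommRing C] [IsDomain C] (D : Subring C)
    (f : C) (hf : f ≠ 0) : (FractionRing C)ˣ ⧸ polarN C D :=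
  QuotientGroup.mk (Units.mk0 (algebraMap C (FractionRing C) f)
    (by rwa [Ne, IsFractionRing.to_map_eq_zero_iff]))

/-! The map is induced by the inclusions `T ⊆ B`, `R ⊆ A`. Every class of `Π(R)` is the class
`[h]_R` of a single `h ∈ T`: in `[f]_R [g]_R⁻¹` one may replace `g⁻¹` by the conjugate `ḡ`,
because `g ḡ = r₁² + r₂² ∈ R`. And `[h]_A = 1` forces `h ∈ M`: from `h a' = β a` with `β ∈ B*`,
`0 ≠ a, a' ∈ A`, the element `k = β⁻¹ h` has `k a' ∈ A`, and comparing `iA`-components in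
`B = A ⊕ iA` gives `k ∈ A`. -/

section PolarGroup

variable {C : Type} [CommRing C] [IsDomain C] (D : Subring C)

theorem exists_mul_eq_of_mem_polarN {v : (FractionRing C)ˣ} (hv : v ∈ polarN C D) :
    ∃ (β : Cˣ) (a a' : C), a ∈ D ∧ a' ∈ D ∧ a' ≠ 0 ∧
      (v : FractionRing C) * algebraMap C _ a' = algebraMap C _ (β * a) := by
  induction hv using Subgroup.closure_induction with
  | mem x hx =>
    rcases hx with ⟨b, hb⟩ | ⟨⟨a, ha⟩, hxa⟩
    · exact ⟨b, 1, 1, D.one_mem, D.one_mem, one_ne_zero, by simp [hb]⟩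
    · exact ⟨1, a, 1, ha, D.one_mem, one_ne_zero, by simp [hxa]⟩
  | one => exact ⟨1, 1, 1, D.one_mem, D.one_mem, one_ne_zero, by simp⟩
  | mul x y _ _ hx hy =>
    obtain ⟨β₁, a₁, a₁', ha₁, ha₁', ha₁'0, e₁⟩ := hx
    obtain ⟨β₂, a₂, a₂', ha₂, ha₂', ha₂'0, e₂⟩ := hy
    refine ⟨β₁ * β₂, a₁ * a₂, a₁' * a₂', D.mul_mem ha₁ ha₂, D.mul_mem ha₁' ha₂',
      mul_ne_zero ha₁'0 ha₂'0, ?_⟩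
    simp only [map_mul, Units.val_mul] at e₁ e₂ ⊢
    linear_combination ((y : FractionRing C) * algebraMap C _ a₂') * e₁ +
      algebraMap C _ (β₁ : C) * algebraMap C _ a₁ * e₂
  | inv x _ hx =>
    obtain ⟨β, a, a', ha, ha', ha'0, e⟩ := hx
    have ha0 : a ≠ 0 := by
      rintro rfl
      simp [ha'0] at e
    refine ⟨β⁻¹, a', a, ha', ha, ha0, ?_⟩
    have hβ : algebraMap C (FractionRing C) (β : C) ≠ 0 := by simp
    have hx : (x : FractionRing C) ≠ 0 := x.ne_zero
    simp only [map_mul, Units.val_inv_eq_inv_val, map_units_inv] at e ⊢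
    field_simp
    linear_combination -e

theorem mem_polarN_of_mul_eq {v : (FractionRing C)ˣ} {β : Cˣ} {a a' : C} (ha : a ∈ D)
    (ha' : a' ∈ D) (ha'0 : a' ≠ 0)
    (e : (v : FractionRing C) * algebraMap C _ a' = algebraMap C _ (β * a)) :
    v ∈ polarN C D := by
  have ha'ι : algebraMap C (FractionRing C) a' ≠ 0 := by simpa using ha'0
  have haι : algebraMap C (FractionRing C) a ≠ 0 := by
    intro h
    simp [h, ha'ι] at e
  have hv : v = Units.map (algebraMap C (FractionRing C)).toMonoidHom β *
      Units.mk0 _ haι * (Units.mk0 _ ha'ι)⁻¹ := by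
    ext
    simp only [Units.val_mul, Units.val_inv_eq_inv_val, Units.val_mk0, Units.coe_map,
      RingHom.toMonoidHom_eq_coe, MonoidHom.coe_coe, ← map_mul, ← e]
    field_simp
  rw [hv]
  refine mul_mem (mul_mem ?_ ?_) (inv_mem ?_) <;> apply Subgroup.subset_closure
  exacts [Or.inl ⟨β, rfl⟩, Or.inr ⟨⟨a, ha⟩, rfl⟩, Or.inr ⟨⟨a', ha'⟩, rfl⟩]

theorem mem_polarN_iff {v : (FractionRing C)ˣ} :
    v ∈ polarN C D ↔ ∃ (β : Cˣ) (a a' : C), a ∈ D ∧ a' ∈ D ∧ a' ≠ 0 ∧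
      (v : FractionRing C) * algebraMap C _ a' = algebraMap C _ (β * a) :=
  ⟨exists_mul_eq_of_mem_polarN D, fun ⟨_, _, _, ha, ha', ha'0, e⟩ =>
    mem_polarN_of_mul_eq D ha ha' ha'0 e⟩

theorem polarCls_eq_one_iff (x : C) (hx : x ≠ 0) :
    polarCls C D x hx = 1 ↔
      ∃ (β : Cˣ) (a a' : C), a ∈ D ∧ a' ∈ D ∧ a' ≠ 0 ∧ x * a' = β * a := by
  rw [polarCls, QuotientGroup.eq_one_iff, mem_polarN_iff]
  simp only [Units.val_mk0, ← map_mul, (IsFractionRing.injective C (FractionRing C)).eq_iff]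

theorem polarCls_eq_one_of_mem {x : C} (hx : x ≠ 0) (hxD : x ∈ D) : polarCls C D x hx = 1 :=
  (polarCls_eq_one_iff D x hx).2 ⟨1, x, 1, hxD, D.one_mem, one_ne_zero, by simp⟩

theorem polarCls_mul {x y : C} (hx : x ≠ 0) (hy : y ≠ 0) :
    polarCls C D (x * y) (mul_ne_zero hx hy) = polarCls C D x hx * polarCls C D y hy := by
  rw [polarCls, polarCls, polarCls, ← QuotientGroup.mk_mul]
  congr 1
  exact Units.ext (map_mul _ x y)

theorem exists_eq_polarCls_of_forall_exists_mul_mem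
    (hconj : ∀ g : C, g ≠ 0 → ∃ g' : C, g' ≠ 0 ∧ g * g' ∈ D)
    (x : (FractionRing C)ˣ ⧸ polarN C D) : ∃ (h : C) (hh : h ≠ 0), x = polarCls C D h hh := by
  obtain ⟨u, rfl⟩ := QuotientGroup.mk_surjective x
  obtain ⟨⟨f, g⟩, hfg⟩ := IsLocalization.mk'_surjective (nonZeroDivisors C) (u : FractionRing C)
  simp only [IsFractionRing.mk'_eq_div] at hfg
  have hg0 : (g : C) ≠ 0 := nonZeroDivisors.coe_ne_zero g
  have hf0 : f ≠ 0 := by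
    rintro rfl
    simp only [map_zero, zero_div] at hfg
    exact u.ne_zero hfg.symm
  obtain ⟨g', hg'0, hgg'⟩ := hconj g hg0
  refine ⟨f * g', mul_ne_zero hf0 hg'0, ?_⟩
  have hg_inv : (polarCls C D g hg0)⁻¹ = polarCls C D g' hg'0 :=
    inv_eq_of_mul_eq_one_right <| by
      rw [← polarCls_mul]
      exact polarCls_eq_one_of_mem D _ hgg'
  calc (u : (FractionRing C)ˣ ⧸ polarN C D)
      = polarCls C D f hf0 * (polarCls C D g hg0)⁻¹ := by
        rw [polarCls, polarCls, ← QuotientGroup.mk_inv, ← QuotientGroup.mk_mul]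
        congr 1
        ext
        simp [← hfg, div_eq_mul_inv]
    _ = polarCls C D (f * g') _ := by rw [hg_inv, polarCls_mul]

end PolarGroup

section Functoriality

variable {C C' : Type} [CommRing C] [CommRing C'] [IsDomain C'] {ι : C →+* C'}
  (hι : Function.Injective ι)

theorem isFractionRing_map_algebraMap (x : C) :
    IsFractionRing.map hι (algebraMap C (FractionRing C) x) =
      algebraMap C' (FractionRing C') (ι x) :=
  IsLocalization.map_eq _ x

variable [IsDomain C] (D : Subring C) (D' : Subring C')

theorem polarN_le_comap (hD : ∀ d ∈ D, ι d ∈ D') :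
    polarN C D ≤ (polarN C' D').comap
      (Units.map (IsFractionRing.map hι : FractionRing C →+* FractionRing C').toMonoidHom) := by
  rw [polarN, Subgroup.closure_le]
  rintro u (⟨b, hb⟩ | ⟨⟨a, ha⟩, hua⟩) <;> apply Subgroup.subset_closure
  · exact Or.inl ⟨Units.map ι.toMonoidHom b, by simp [hb, isFractionRing_map_algebraMap]⟩
  · exact Or.inr ⟨⟨ι a, hD a ha⟩, by simp [hua, isFractionRing_map_algebraMap]⟩

noncomputable def polarMap (hD : ∀ d ∈ D, ι d ∈ D') :
    ((FractionRing C)ˣ ⧸ polarN C D) →* ((FractionRing C')ˣ ⧸ polarN C' D') :=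
  QuotientGroup.map _ _ _ (polarN_le_comap hι D D' hD)

theorem polarMap_polarCls (hD : ∀ d ∈ D, ι d ∈ D') (x : C) (hx : x ≠ 0) :
    polarMap hι D D' hD (polarCls C D x hx) =
      polarCls C' D' (ι x) ((map_ne_zero_iff ι hι).2 hx) := by
  rw [polarMap, polarCls, polarCls, QuotientGroup.map_mk]
  congr 1
  ext
  simp [isFractionRing_map_algebraMap]

end Functoriality

section Decomposition

variable {B : Type} [CommRing B] {A : Subring B} {j : B}
  (hdecomp : ∀ b : B, ∃! p : A × A, b = p.1 + j * p.2)
include hdecomp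

theorem eq_zero_of_add_mul_eq_zero {x y : B} (hx : x ∈ A) (hy : y ∈ A) (h : x + j * y = 0) :
    x = 0 ∧ y = 0 := by
  obtain ⟨p, -, huniq⟩ := hdecomp 0
  have hxy := (huniq (⟨x, hx⟩, ⟨y, hy⟩) h.symm).trans (huniq 0 (by simp)).symm
  simp only [Prod.ext_iff, Prod.fst_zero, Prod.snd_zero, Subtype.ext_iff] at hxy
  exact hxy

theorem mem_of_mul_mem [IsDomain B] {k a : B} (ha : a ∈ A) (ha0 : a ≠ 0) (hka : k * a ∈ A) :
    k ∈ A := by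
  obtain ⟨p, hp, -⟩ := hdecomp k
  have hsplit : ((p.1 : B) * a - k * a) + j * ((p.2 : B) * a) = 0 := by
    rw [hp]; ring
  have hp2 : (p.2 : B) * a = 0 :=
    (eq_zero_of_add_mul_eq_zero hdecomp (A.sub_mem (A.mul_mem p.1.2 ha) hka)
      (A.mul_mem p.2.2 ha) hsplit).2
  rw [hp, (mul_eq_zero.1 hp2).resolve_right ha0, mul_zero, add_zero]
  exact p.1.2

theorem polarCls_eq_one_iff_exists_units_mul [IsDomain B] {h : B} (hh : h ≠ 0) :
    polarCls B A h hh = 1 ↔ ∃ ω : Bˣ, ∃ a ∈ A, a ≠ 0 ∧ h = ω * a := by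
  rw [polarCls_eq_one_iff]
  constructor
  · rintro ⟨β, a, a', ha, ha', ha'0, e⟩
    have hk : (↑β⁻¹ * h) * a' = a := by
      rw [mul_assoc, e, ← mul_assoc, Units.inv_mul, one_mul]
    refine ⟨β, ↑β⁻¹ * h, mem_of_mul_mem hdecomp ha' ha'0 (hk ▸ ha),
      mul_ne_zero (Units.ne_zero _) hh, ?_⟩
    rw [← mul_assoc, Units.mul_inv, one_mul]
  · rintro ⟨ω, a, ha, -, rfl⟩
    exact ⟨ω, a, 1, ha, A.one_mem, one_ne_zero, mul_one _⟩

theorem exists_ne_zero_mul_mem (hj : j * j = -1) {R T : Subring B} (hRA : R ≤ A)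
    (hT : ∀ b : B, b ∈ T ↔ ∃ r₁ ∈ R, ∃ r₂ ∈ R, b = r₁ + j * r₂) {g : B} (hg : g ∈ T)
    (hg0 : g ≠ 0) : ∃ g' ∈ T, g' ≠ 0 ∧ g * g' ∈ R := by
  obtain ⟨r₁, hr₁, r₂, hr₂, rfl⟩ := (hT g).1 hg
  refine ⟨r₁ + j * -r₂, (hT _).2 ⟨r₁, hr₁, -r₂, R.neg_mem hr₂, rfl⟩, ?_, ?_⟩
  · intro h
    obtain ⟨rfl, hr₂0⟩ := eq_zero_of_add_mul_eq_zero hdecomp (hRA hr₁) (A.neg_mem (hRA hr₂)) h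
    rw [neg_eq_zero.1 hr₂0, mul_zero, add_zero] at hg0
    exact hg0 rfl
  · have hnorm : (r₁ + j * r₂) * (r₁ + j * -r₂) = r₁ * r₁ + r₂ * r₂ := by
      linear_combination (-(r₂ * r₂)) * hj
    rw [hnorm]
    exact R.add_mem (R.mul_mem hr₁ hr₁) (R.mul_mem hr₂ hr₂)

end Decomposition

/-- Let `A` be a Noetherian integral `ℝ`-domain in which `ℝ` is
algebraically closed and `B = ℂ ⊗ℝ A` an integral domain (so `B = A ⊕ iA`).
Let `R ⊆ A` be an `ℝ`-subalgebra which is itself a Noetherian domain with `ℝ`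
algebraically closed in it, and let `T = ℂ ⊗ℝ R = R ⊕ iR ⊆ B`.  Let
`M = {ω·a : ω ∈ B*, 0 ≠ a ∈ A}`.  Then `φ : Π(R) → Π(A)`, `[f]_R ↦ [f]_A`, is a
well-defined group homomorphism whose kernel is the subgroup `⟨M ∩ T⟩_R` generated by
the classes of elements of `M ∩ T`. -/
theorem polarGroup_subalgebra_hom (B : Type) [CommRing B] [IsDomain B] [Algebra ℂ B]
    (A : Subring B)
    (hdecomp : ∀ b : B, ∃! p : ↥A × ↥A,
      b = (p.1 : B) + algebraMap ℂ B Complex.I * (p.2 : B))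
    (R : Subring B) (hRA : R ≤ A)
    (T : Subring B)
    (hT : ∀ b : B, b ∈ T ↔ ∃ r₁ ∈ R, ∃ r₂ ∈ R, b = r₁ + algebraMap ℂ B Complex.I * r₂) :
    ∃ φ : ((FractionRing ↥T)ˣ ⧸ polarN ↥T (Subring.comap T.subtype R)) →*
        ((FractionRing B)ˣ ⧸ polarN B A),
      (∀ (f : ↥T) (hf : f ≠ 0),
        φ (polarCls ↥T (Subring.comap T.subtype R) f hf) =
          polarCls B A (f : B) (by simpa using hf)) ∧
      φ.ker = Subgroup.closure
        {x | ∃ (g : ↥T) (hg : g ≠ 0),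
          (∃ ω : Bˣ, ∃ a ∈ A, a ≠ 0 ∧ (g : B) = (ω : B) * a) ∧
          x = polarCls ↥T (Subring.comap T.subtype R) g hg} := by
  have hI : algebraMap ℂ B Complex.I * algebraMap ℂ B Complex.I = -1 := by
    rw [← map_mul, Complex.I_mul_I, map_neg, map_one]
  have hD : ∀ d ∈ R.comap T.subtype, T.subtype d ∈ A := fun _ hd => hRA hd
  refine ⟨polarMap T.subtype_injective _ A hD, polarMap_polarCls _ _ _ hD,
    le_antisymm (fun x hx => ?_) ?_⟩
  · have hconj (g : T) (hg0 : g ≠ 0) : ∃ g' : T, g' ≠ 0 ∧ g * g' ∈ R.comap T.subtype := by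
      obtain ⟨g', hg'T, hg'0, hgg'⟩ :=
        exists_ne_zero_mul_mem hdecomp hI hRA hT g.2 (by simpa using hg0)
      exact ⟨⟨g', hg'T⟩, by simpa using hg'0, hgg'⟩
    obtain ⟨h, hh0, rfl⟩ := exists_eq_polarCls_of_forall_exists_mul_mem _ hconj x
    rw [MonoidHom.mem_ker, polarMap_polarCls, polarCls_eq_one_iff_exists_units_mul hdecomp] at hx
    exact Subgroup.subset_closure ⟨h, hh0, hx, rfl⟩
  · rw [Subgroup.closure_le]
    rintro _ ⟨g, hg0, hM, rfl⟩
    rw [SetLike.mem_coe, MonoidHom.mem_ker, polarMap_polarCls,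
      polarCls_eq_one_iff_exists_units_mul hdecomp]
    exact hM
end

section
/- Let R ⊆ A be an ℝ-subalgebra which is itself a Noetherian integral domain in which ℝ is algebraically closed, and let T = ℂ ⊗_ℝ R, viewed as a subring of B. If T is factorially closed in B (that is, whenever f, g ∈ B are nonzero and fg ∈ T, then f ∈ T and g ∈ T), then the group homomorphism φ : Π(R) → Π(A), [f]_R ↦ [f]_A, is injective, so Π(R) is (isomorphic to) a subgroup of Π(A). -/
/-- Explicit description of membership in `polarN`. -/
lemma mem_polarN_elim (C : Type) [CommRing C] [IsDomain C] (D : Subring C)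
    {u : (FractionRing C)ˣ} (hu : u ∈ polarN C D) :
    ∃ (b : Cˣ) (a₁ a₂ : C), a₁ ∈ D ∧ a₂ ∈ D ∧ a₁ ≠ 0 ∧ a₂ ≠ 0 ∧
      (u : FractionRing C) * algebraMap C (FractionRing C) a₂ =
        algebraMap C (FractionRing C) ((b : C) * a₁) := by
  set F := FractionRing C
  have hinj := IsFractionRing.injective C F
  induction hu using Subgroup.closure_induction with
  | mem x hx =>
    rcases hx with ⟨b, hb⟩ | ⟨a, ha⟩
    · exact ⟨b, 1, 1, one_mem D, one_mem D, one_ne_zero, one_ne_zero, by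
        simp [hb]⟩
    · refine ⟨1, (a : C), 1, a.2, one_mem D, ?_, one_ne_zero, by simp [ha]⟩
      intro h0
      apply x.ne_zero
      rw [ha, h0, map_zero]
  | one => exact ⟨1, 1, 1, one_mem D, one_mem D, one_ne_zero, one_ne_zero, by simp⟩
  | mul x y hx hy ihx ihy =>
    obtain ⟨b, a₁, a₂, h1, h2, h3, h4, heq⟩ := ihx
    obtain ⟨b', a₁', a₂', h1', h2', h3', h4', heq'⟩ := ihy
    refine ⟨b * b', a₁ * a₁', a₂ * a₂', mul_mem h1 h1', mul_mem h2 h2',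
      mul_ne_zero h3 h3', mul_ne_zero h4 h4', ?_⟩
    rw [Units.val_mul, Units.val_mul, map_mul, map_mul, map_mul]
    calc (x : F) * (y : F) * ((algebraMap C F) a₂ * (algebraMap C F) a₂')
        = ((x : F) * algebraMap C F a₂) * ((y : F) * algebraMap C F a₂') := by ring
      _ = _ := by rw [heq, heq', map_mul, map_mul, map_mul]; ring
  | inv x hx ihx =>
    obtain ⟨b, a₁, a₂, h1, h2, h3, h4, heq⟩ := ihx
    refine ⟨b⁻¹, a₂, a₁, h2, h1, h4, h3, ?_⟩
    have hxne : (x : F) ≠ 0 := x.ne_zero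
    have hbne : algebraMap C F (b : C) ≠ 0 := fun h => b.ne_zero (hinj (by simpa using h))
    have ha₁ : algebraMap C F a₁ ≠ 0 := fun h => h3 (hinj (by simpa using h))
    have hb : algebraMap C F ((b⁻¹ : Cˣ) : C) = (algebraMap C F ((b : Cˣ) : C))⁻¹ := by
      refine eq_inv_of_mul_eq_one_left ?_
      rw [← map_mul]
      simp
    rw [Units.val_inv_eq_inv_val, map_mul, hb]
    rw [map_mul] at heq
    field_simp
    linear_combination -heq
set_option maxHeartbeats 1000000 in
/-- Let `A` be a Noetherian integral `ℝ`-domain in which `ℝ` is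
algebraically closed and `B = ℂ ⊗ℝ A` an integral domain (so `B = A ⊕ iA`).
Let `R ⊆ A` be an `ℝ`-subalgebra which is itself a Noetherian domain with `ℝ`
algebraically closed in it, and let `T = ℂ ⊗ℝ R = R ⊕ iR ⊆ B`.  If `T` is factorially
closed in `B` (nonzero `f, g` with `fg ∈ T` implies `f, g ∈ T`), then the group
homomorphism `φ : Π(R) → Π(A)`, `[f]_R ↦ [f]_A`, is injective; so `Π(R)` is
(isomorphic to) a subgroup of `Π(A)`. -/
theorem polarGroup_subalgebra_injective (B : Type) [CommRing B] [IsDomain B]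
    [Algebra ℂ B] [Algebra ℝ B] [IsScalarTower ℝ ℂ B] (A : Subring B)
    (hRmem : ∀ r : ℝ, algebraMap ℝ B r ∈ A)
    (hNoeth : IsNoetherianRing ↥A)
    (halgclosed : ∀ a ∈ A, IsAlgebraic ℝ a → ∃ r : ℝ, a = algebraMap ℝ B r)
    (hdecomp : ∀ b : B, ∃! p : ↥A × ↥A,
      b = (p.1 : B) + algebraMap ℂ B Complex.I * (p.2 : B))
    (R : Subring B) (hRA : R ≤ A)
    (hRℝ : ∀ r : ℝ, algebraMap ℝ B r ∈ R)
    (hRNoeth : IsNoetherianRing ↥R)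
    (hRalgclosed : ∀ a ∈ R, IsAlgebraic ℝ a → ∃ r : ℝ, a = algebraMap ℝ B r)
    (T : Subring B)
    (hT : ∀ b : B, b ∈ T ↔ ∃ r₁ ∈ R, ∃ r₂ ∈ R, b = r₁ + algebraMap ℂ B Complex.I * r₂)
    (hfc : ∀ f g : B, f ≠ 0 → g ≠ 0 → f * g ∈ T → f ∈ T ∧ g ∈ T) :
    ∃ φ : ((FractionRing ↥T)ˣ ⧸ polarN ↥T (Subring.comap T.subtype R)) →*
        ((FractionRing B)ˣ ⧸ polarN B A),
      (∀ (f : ↥T) (hf : f ≠ 0),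
        φ (polarCls ↥T (Subring.comap T.subtype R) f hf) =
          polarCls B A (f : B) (by simpa using hf)) ∧
      Function.Injective φ := by
  classical
  set i : B := algebraMap ℂ B Complex.I with hi_def
  have hi2 : i * i = -1 := by
    rw [hi_def, ← map_mul, Complex.I_mul_I, map_neg, map_one]
  have hine : i ≠ 0 := by
    intro h
    have : (-1 : B) = 0 := by rw [← hi2, h, mul_zero]
    simpa using this
  have h2ne : (2 : B) ≠ 0 := by
    have h := (algebraMap ℝ B).injective
    intro h0
    have : algebraMap ℝ B 2 = algebraMap ℝ B 0 := by
      rw [map_ofNat, map_zero, h0]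
    exact two_ne_zero (h this)
  -- decomposition function
  choose d hd using fun b => (hdecomp b).exists
  have dspec : ∀ (b : B) (p q : ↥A), b = (p : B) + i * (q : B) → d b = (p, q) := by
    intro b p q h
    exact (hdecomp b).unique (hd b) h
  -- conjugation
  set σ : B → B := fun b => ((d b).1 : B) - i * ((d b).2 : B) with hσ_def
  have hσval : ∀ (b : B) (p q : ↥A), b = (p : B) + i * (q : B) →
      σ b = (p : B) - i * (q : B) := by
    intro b p q h
    rw [hσ_def]
    simp only [dspec b p q h]
  have hσA : ∀ b ∈ A, σ b = b := by
    intro b hb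
    have := hσval b ⟨b, hb⟩ 0 (by simp)
    simpa using this
  have hσmul : ∀ x y : B, σ (x * y) = σ x * σ y := by
    intro x y
    have hx := hd x
    have hy := hd y
    have hxy : x * y = (((d x).1 * (d y).1 - (d x).2 * (d y).2 : ↥A) : B)
        + i * (((d x).1 * (d y).2 + (d x).2 * (d y).1 : ↥A) : B) := by
      push_cast
      linear_combination y * hx + (((d x).1 : B) + i * ((d x).2 : B)) * hy
        + (((d x).2 : B) * ((d y).2 : B)) * hi2
    have h1 := hσval _ _ _ hxy
    have h2 := hσval x _ _ hx
    have h3 := hσval y _ _ hy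
    rw [h1, h2, h3]
    push_cast
    linear_combination (-(((d x).2 : B) * ((d y).2 : B))) * hi2
  have hσσ : ∀ x : B, σ (σ x) = x := by
    intro x
    have hx := hd x
    have h1 := hσval x _ _ hx
    have h2 : σ x = ((d x).1 : B) + i * ((-(d x).2 : ↥A) : B) := by
      rw [h1]; push_cast; ring
    have h3 := hσval _ _ _ h2
    rw [h3]
    push_cast
    linear_combination -hx
  have hσne : ∀ x : B, x ≠ 0 → σ x ≠ 0 := by
    intro x hx h0
    apply hx
    have h : σ (σ x) = σ 0 := by rw [h0]
    rw [hσσ] at h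
    rw [h, hσA 0 (zero_mem A)]
  have hσT : ∀ b ∈ T, σ b ∈ T := by
    intro b hb
    obtain ⟨r₁, hr₁, r₂, hr₂, hbr⟩ := (hT b).1 hb
    have hval := hσval b ⟨r₁, hRA hr₁⟩ ⟨r₂, hRA hr₂⟩ hbr
    rw [hval]
    exact (hT _).2 ⟨r₁, hr₁, -r₂, neg_mem hr₂, by push_cast; ring⟩
  have hσfix : ∀ b ∈ T, σ b = b → b ∈ R := by
    intro b hb hfix
    obtain ⟨r₁, hr₁, r₂, hr₂, hbr⟩ := (hT b).1 hb
    have hval := hσval b ⟨r₁, hRA hr₁⟩ ⟨r₂, hRA hr₂⟩ hbr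
    have h0 : (2 : B) * (i * r₂) = 0 := by
      have h := hfix
      rw [hval, hbr] at h
      push_cast at h
      linear_combination -h
    have hr₂0 : r₂ = 0 := by
      rcases mul_eq_zero.1 h0 with h | h
      · exact absurd h h2ne
      · rcases mul_eq_zero.1 h with h' | h'
        · exact absurd h' hine
        · exact h'
    rw [hbr, hr₂0, mul_zero, add_zero]
    exact hr₁
  -- units of B lie in T
  have hBunitT : ∀ b : Bˣ, ((b : B) ∈ T) ∧ (((b⁻¹ : Bˣ) : B) ∈ T) := by
    intro b
    refine hfc _ _ b.ne_zero b⁻¹.ne_zero ?_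
    rw [b.mul_inv]
    exact one_mem T
  -- the map between fraction fields
  have hy : nonZeroDivisors ↥T ≤ Submonoid.comap T.subtype (nonZeroDivisors B) := by
    intro x hx
    rw [Submonoid.mem_comap, mem_nonZeroDivisors_iff_ne_zero]
    rw [mem_nonZeroDivisors_iff_ne_zero] at hx
    simpa using fun h => hx (Subtype.ext h)
  set j : FractionRing ↥T →+* FractionRing B :=
    IsLocalization.map (FractionRing B) T.subtype hy with hj_def
  have hjalg : ∀ t : ↥T, j (algebraMap ↥T (FractionRing ↥T) t)
      = algebraMap B (FractionRing B) (t : B) := fun t => IsLocalization.map_eq hy t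
  set R' : Subring ↥T := Subring.comap T.subtype R with hR'_def
  have hBinj := IsFractionRing.injective B (FractionRing B)
  have hTinj := IsFractionRing.injective ↥T (FractionRing ↥T)
  -- jm maps polarN T R' into polarN B A
  have hle : polarN ↥T R' ≤
      Subgroup.comap (Units.map (j : FractionRing ↥T →* FractionRing B)) (polarN B A) := by
    rw [polarN, Subgroup.closure_le]
    rintro u (⟨b, hb⟩ | ⟨a, ha⟩)
    · rw [SetLike.mem_coe, Subgroup.mem_comap]
      apply Subgroup.subset_closure
      refine Or.inl ⟨Units.map T.subtype.toMonoidHom b, ?_⟩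
      rw [Units.coe_map, Units.coe_map]
      simp only [MonoidHom.coe_coe, RingHom.toMonoidHom_eq_coe]
      rw [hb, hjalg]
      rfl
    · rw [SetLike.mem_coe, Subgroup.mem_comap]
      apply Subgroup.subset_closure
      refine Or.inr ⟨⟨((a : ↥T) : B), hRA a.2⟩, ?_⟩
      rw [Units.coe_map]
      simp only [MonoidHom.coe_coe]
      rw [ha, hjalg]
  refine ⟨QuotientGroup.map _ _ (Units.map (j : FractionRing ↥T →* FractionRing B)) hle, ?_, ?_⟩
  · intro f hf
    rw [polarCls, polarCls, QuotientGroup.map_mk]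
    congr 1
    ext
    rw [Units.coe_map]
    simp only [Units.val_mk0, MonoidHom.coe_coe]
    exact hjalg f
  · rw [injective_iff_map_eq_one]
    intro x hx
    induction x using QuotientGroup.induction_on with
    | H u =>
    rw [QuotientGroup.map_mk, QuotientGroup.eq_one_iff] at hx
    rw [QuotientGroup.eq_one_iff]
    -- extract data from membership in polarN B A
    obtain ⟨b, a₁, a₂, ha₁A, ha₂A, ha₁ne, ha₂ne, heq⟩ := mem_polarN_elim B A hx
    rw [Units.coe_map] at heq
    simp only [MonoidHom.coe_coe] at heq
    obtain ⟨⟨t₁, t₂⟩, hsur⟩ := IsLocalization.surj (nonZeroDivisors ↥T) (u : FractionRing ↥T)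
    have ht₂ne : ((t₂ : ↥T) : B) ≠ 0 := by
      have h := mem_nonZeroDivisors_iff_ne_zero.1 t₂.2
      simpa using fun h' => h (Subtype.ext h')
    have halgt₂ne : algebraMap ↥T (FractionRing ↥T) (t₂ : ↥T) ≠ 0 := by
      rw [Ne, IsFractionRing.to_map_eq_zero_iff]
      exact fun h => ht₂ne (Subtype.ext_iff.1 h)
    have ht₁ne : (t₁ : B) ≠ 0 := by
      intro h
      have ht₁0 : t₁ = 0 := Subtype.ext h
      rw [ht₁0, map_zero] at hsur
      exact mul_ne_zero u.ne_zero halgt₂ne hsur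
    -- transfer hsur to FractionRing B
    have hsurB : j (u : FractionRing ↥T) * algebraMap B (FractionRing B) ((t₂ : ↥T) : B)
        = algebraMap B (FractionRing B) (t₁ : B) := by
      rw [← hjalg, ← hjalg, ← map_mul, hsur]
    -- the key B-equation
    have hBeq : (t₁ : B) * a₂ = (b : B) * a₁ * ((t₂ : ↥T) : B) := by
      apply hBinj
      rw [map_mul, map_mul, map_mul, ← hsurB]
      rw [map_mul] at heq
      linear_combination algebraMap B (FractionRing B) ((t₂ : ↥T) : B) * heq
    -- b and its inverse lie in T
    obtain ⟨hbT, hbinvT⟩ := hBunitT b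
    obtain ⟨t₂', ht₂'_def⟩ : ∃ x : B, x = (b : B) * ((t₂ : ↥T) : B) := ⟨_, rfl⟩
    have ht₂'T : t₂' ∈ T := ht₂'_def ▸ mul_mem hbT (t₂ : ↥T).2
    have ht₂'ne : t₂' ≠ 0 := ht₂'_def ▸ mul_ne_zero b.ne_zero ht₂ne
    have hE1 : (t₁ : B) * a₂ = t₂' * a₁ := by rw [ht₂'_def]; linear_combination hBeq
    have hE2 : σ (t₁ : B) * a₂ = σ t₂' * a₁ := by
      have h := congrArg σ hE1
      rw [hσmul, hσmul, hσA a₂ ha₂A, hσA a₁ ha₁A] at h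
      exact h
    have hcancel : (t₁ : B) * σ t₂' = σ (t₁ : B) * t₂' := by
      apply mul_right_cancel₀ ha₂ne
      have hx1 : ((t₁ : B) * a₂) * σ t₂' = (t₂' * a₁) * σ t₂' := by rw [hE1]
      have hx2 : (σ (t₁ : B) * a₂) * t₂' = (σ t₂' * a₁) * t₂' := by rw [hE2]
      linear_combination hx1 - hx2
    obtain ⟨s, hs_def⟩ : ∃ x : B, x = (t₁ : B) * σ t₂' := ⟨_, rfl⟩
    have hsT : s ∈ T := hs_def ▸ mul_mem t₁.2 (hσT _ ht₂'T)
    have hσs : σ s = s := by rw [hs_def, hσmul, hσσ, hcancel]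
    have hsR : s ∈ R := hσfix s hsT hσs
    have hsne : s ≠ 0 := hs_def ▸ mul_ne_zero ht₁ne (hσne _ ht₂'ne)
    obtain ⟨Q, hQ_def⟩ : ∃ x : B, x = t₂' * σ t₂' := ⟨_, rfl⟩
    have hQT : Q ∈ T := hQ_def ▸ mul_mem ht₂'T (hσT _ ht₂'T)
    have hσQ : σ Q = Q := by rw [hQ_def, hσmul, hσσ, mul_comm]
    have hQR : Q ∈ R := hσfix Q hQT hσQ
    have hQne : Q ≠ 0 := hQ_def ▸ mul_ne_zero ht₂'ne (hσne _ ht₂'ne)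
    -- key identity: t₁ * Q = t₂' * s in B
    have hkey : (t₁ : B) * Q = t₂' * s := by rw [hQ_def, hs_def]; ring
    -- build the three units of FractionRing ↥T
    have hbTne : algebraMap ↥T (FractionRing ↥T) (⟨(b : B), hbT⟩ : ↥T) ≠ 0 := by
      rw [Ne, IsFractionRing.to_map_eq_zero_iff]
      exact fun h => b.ne_zero (Subtype.ext_iff.1 h)
    have hsTne : algebraMap ↥T (FractionRing ↥T) (⟨s, hsT⟩ : ↥T) ≠ 0 := by
      rw [Ne, IsFractionRing.to_map_eq_zero_iff]
      exact fun h => hsne (Subtype.ext_iff.1 h)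
    have hQTne : algebraMap ↥T (FractionRing ↥T) (⟨Q, hQT⟩ : ↥T) ≠ 0 := by
      rw [Ne, IsFractionRing.to_map_eq_zero_iff]
      exact fun h => hQne (Subtype.ext_iff.1 h)
    obtain ⟨bU, hbU⟩ : ∃ v : (↥T)ˣ, (v : ↥T) = ⟨(b : B), hbT⟩ := by
      refine ⟨⟨⟨(b : B), hbT⟩, ⟨((b⁻¹ : Bˣ) : B), hbinvT⟩, Subtype.ext ?_, Subtype.ext ?_⟩, rfl⟩
      · simpa using b.mul_inv
      · simpa using b.inv_mul
    have hm₁ : Units.mk0 _ hbTne ∈ polarN ↥T R' := by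
      apply Subgroup.subset_closure
      exact Or.inl ⟨bU, by rw [hbU, Units.val_mk0]⟩
    have hm₂ : Units.mk0 _ hsTne ∈ polarN ↥T R' := by
      apply Subgroup.subset_closure
      exact Or.inr ⟨⟨⟨s, hsT⟩, hsR⟩, by rw [Units.val_mk0]⟩
    have hm₃ : Units.mk0 _ hQTne ∈ polarN ↥T R' := by
      apply Subgroup.subset_closure
      exact Or.inr ⟨⟨⟨Q, hQT⟩, hQR⟩, by rw [Units.val_mk0]⟩
    have hkeyT : t₁ * (⟨Q, hQT⟩ : ↥T) = (⟨(b : B), hbT⟩ : ↥T) * (t₂ : ↥T) * ⟨s, hsT⟩ := by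
      apply Subtype.ext
      push_cast
      rw [hkey, ht₂'_def]
    have hu : u = Units.mk0 _ hbTne * Units.mk0 _ hsTne * (Units.mk0 _ hQTne)⁻¹ := by
      ext
      rw [Units.val_mul, Units.val_mul, Units.val_inv_eq_inv_val]
      rw [Units.val_mk0, Units.val_mk0, Units.val_mk0]
      have halg : algebraMap ↥T (FractionRing ↥T) t₁ * algebraMap ↥T (FractionRing ↥T) ⟨Q, hQT⟩
          = algebraMap ↥T (FractionRing ↥T) (⟨(b : B), hbT⟩ : ↥T)
            * algebraMap ↥T (FractionRing ↥T) (t₂ : ↥T)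
            * algebraMap ↥T (FractionRing ↥T) (⟨s, hsT⟩ : ↥T) := by
        rw [← map_mul, ← map_mul, ← map_mul, hkeyT]
      field_simp
      apply mul_right_cancel₀ halgt₂ne
      linear_combination halg + algebraMap ↥T (FractionRing ↥T) (⟨Q, hQT⟩ : ↥T) * hsur
    rw [hu]
    exact mul_mem (mul_mem hm₁ hm₂) (Subgroup.inv_mem _ hm₃)
end
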